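/- For every natural number N ≥ 1 and every n with 1 ≤ n ≤ N, the coefficient of X^n in the polynomial X · ∏_{m=1}^{N} (1 − X^m)^{24} ∈ (ZMod 2)[X] equals 1 if n is the square of an odd natural number (i.e., n = (2k+1)² for some k ∈ ℕ), and equals 0 otherwise. (This expresses the congruence Δ(τ) ≡ q + q⁹ + q²⁵ + q⁴⁹ + ⋯ (mod 2) for the discriminant modular form Δ = q∏_{m≥1}(1−q^m)^{24}: its mod 2 reduction is supported exactly on the odd squares.) -/

import Mathlib

open Polynomial

noncomputable section
open Finset

abbrev A2 := Polynomial (ZMod 2)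

lemma htwo : (2 : A2) = 0 := by
  exact_mod_cast CharP.cast_eq_zero A2 2

def gb : ℕ → ℕ → A2
  | 0, 0 => 1
  | 0, _+1 => 0
  | _+1, 0 => 1
  | m+1, a+1 => gb m (a+1) + X^(m - a) * gb m a

@[simp] lemma gb_zero_right : ∀ m, gb m 0 = 1
  | 0 => rfl
  | _+1 => rfl

lemma gb_succ_succ (m a : ℕ) : gb (m+1) (a+1) = gb m (a+1) + X^(m - a) * gb m a := rfl

lemma gb_lt : ∀ {m a}, m < a → gb m a = 0
  | 0, _+1, _ => rfl
  | m+1, a+1, h => by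
    rw [gb_succ_succ, gb_lt (by omega : m < a+1), gb_lt (by omega : m < a), mul_zero, add_zero]

@[simp] lemma gb_self : ∀ m, gb m m = 1
  | 0 => rfl
  | m+1 => by
    rw [gb_succ_succ, gb_lt (by omega : m < m+1), gb_self m, Nat.sub_self, pow_zero,
      one_mul, zero_add]

lemma gbC : ∀ m a, (1 + X^(a+1)) * gb m (a+1) = (1 + X^(m - a)) * gb m a
  | 0, 0 => by
    rw [gb_lt (by omega : 0 < 1), gb_zero_right, Nat.sub_self, pow_zero, mul_zero, mul_one]
    linear_combination -htwo
  | 0, a+1 => by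
    rw [gb_lt (show 0 < a+2 by omega), gb_lt (show 0 < a+1 by omega), mul_zero, mul_zero]
  | m+1, 0 => by
    have H1 := gbC m 0
    simp only [Nat.sub_zero, gb_zero_right, mul_one] at H1 ⊢
    rw [gb_succ_succ m 0]
    simp only [Nat.sub_zero, gb_zero_right, mul_one]
    linear_combination H1 + (X^m : A2) * htwo
  | m+1, a+1 => by
    rcases lt_or_ge (m+1) (a+1) with hlt | hle
    · rw [gb_lt (by omega : m+1 < a+2), gb_lt hlt, mul_zero, mul_zero]
    rcases eq_or_lt_of_le hle with heq | hlt'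
    · have ha : a = m := by omega
      subst ha
      rw [gb_lt (by omega : a+1 < a+2), gb_self, mul_zero, Nat.sub_self, pow_zero, mul_one]
      linear_combination -htwo
    · have hb : a + 1 ≤ m := by omega
      obtain ⟨c, hc⟩ : ∃ c, m = a + 1 + c := ⟨m - (a+1), by omega⟩
      have H1 := gbC m (a+1)
      have H2 := gbC m a
      rw [gb_succ_succ m (a+1), gb_succ_succ m a]
      rw [show m - (a+1) = c by omega] at *
      rw [show m - a = c + 1 by omega] at *
      rw [show m + 1 - (a+1) = c + 1 by omega]
      linear_combination H1 + X^(c+1) * H2 + ((X^c : A2) - X^(c+1)) * gb m (a+1) * htwo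

lemma pascal2 (m a : ℕ) : gb (m+1) (a+1) = X^(a+1) * gb m (a+1) + gb m a := by
  rcases le_or_gt a m with h | h
  · have H := gbC m a
    rw [gb_succ_succ]
    linear_combination -H + (gb m (a+1) - gb m a) * htwo
  · rw [gb_lt (by omega : m+1 < a+1), gb_lt (by omega : m < a+1), gb_lt (by omega : m < a),
      mul_zero, add_zero]

def Dq (r : ℕ) : A2 := ∏ i ∈ Finset.Ioc 0 r, (1 + X^i)

@[simp] lemma Dq_zero : Dq 0 = 1 := by simp [Dq]

lemma Dq_succ (r : ℕ) : Dq (r+1) = Dq r * (1 + X^(r+1)) := by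
  rw [Dq, Dq, Finset.prod_Ioc_succ_top (by omega : 0 ≤ r)]

lemma gb_prod : ∀ m a, a ≤ m → gb m a * Dq a * Dq (m - a) = Dq m
  | 0, 0, _ => by simp
  | m+1, 0, _ => by simp
  | m+1, a+1, h => by
    rcases eq_or_lt_of_le h with heq | hlt
    · rw [← heq, gb_self, Nat.sub_self, Dq_zero, one_mul, mul_one]
    · have hb : a + 1 ≤ m := by omega
      obtain ⟨e, he⟩ : ∃ e, m = a + 1 + e := ⟨m - (a+1), by omega⟩
      have IH1 := gb_prod m (a+1) hb
      have IH2 := gb_prod m a (by omega)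
      rw [gb_succ_succ]
      rw [show m - a = e + 1 by omega] at *
      rw [show m - (a+1) = e by omega] at *
      rw [show m + 1 - (a+1) = e + 1 by omega]
      subst he
      rw [Dq_succ (a+1+e)]
      rw [Dq_succ e] at IH2 ⊢
      have hDa := Dq_succ a
      linear_combination (1 + X^(e+1)) * IH1 + X^(e+1) * (1+X^(a+1)) * IH2
        + X^(e+1)*(1+X^(e+1)) * (gb (a+1+e) a) * (Dq e) * hDa
        + (X^(e+1) : A2) * Dq (a+1+e) * htwo

def gbz (m : ℕ) (a : ℤ) : A2 := if a < 0 then 0 else gb m a.toNat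

lemma gbz_neg {m : ℕ} {a : ℤ} (h : a < 0) : gbz m a = 0 := by simp [gbz, h]

lemma gbz_coe (m b : ℕ) : gbz m (b : ℤ) = gb m b := by simp [gbz]

lemma gbz_gt {m : ℕ} {a : ℤ} (h : (m:ℤ) < a) : gbz m a = 0 := by
  rw [gbz, if_neg (by omega)]
  exact gb_lt (by omega)

lemma dPnat (m b : ℕ) (h : b ≤ m) :
    gb (m+2) (b+2) = (1+X^(m+1)) * gb m (b+1) + X^(b+2) * gb m (b+2) + X^(m-b) * gb m b := by
  obtain ⟨e, he⟩ : ∃ e, m = b + e := ⟨m - b, by omega⟩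
  have h1 : gb (m+2) (b+2) = gb (m+1) (b+2) + X^(m-b) * gb (m+1) (b+1) := by
    rw [gb_succ_succ (m+1) (b+1), show m+1-(b+1) = m - b by omega]
  rw [h1, pascal2 m (b+1), pascal2 m b]
  rw [show m - b = e by omega]
  subst he
  ring

lemma dPz (m : ℕ) (a : ℤ) :
    gbz (m+2) a = (1+X^(m+1)) * gbz m (a-1) + X^(a.toNat) * gbz m a
      + X^((m+2-a).toNat) * gbz m (a-2) := by
  rcases lt_or_ge a 0 with h | h
  · rw [gbz_neg (m := m+2) h, gbz_neg (m := m) (show a-1 < 0 by omega),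
      gbz_neg (m := m) (show a-2 < 0 by omega), gbz_neg (m := m) h]
    ring
  rcases lt_or_ge (m+2 : ℤ) a with h2 | h2
  · rw [gbz_gt (m := m+2) (by exact_mod_cast h2), gbz_gt (m := m) (show (m:ℤ) < a-1 by omega),
      gbz_gt (m := m) (show (m:ℤ) < a by omega), gbz_gt (m := m) (show (m:ℤ) < a-2 by omega)]
    ring
  -- 0 ≤ a ≤ m+2
  rcases Int.eq_ofNat_of_zero_le h with ⟨b, rfl⟩
  match b with
  | 0 =>
    rw [gbz_neg (m := m) (show ((0:ℕ):ℤ)-1 < 0 by norm_num),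
      gbz_neg (m := m) (show ((0:ℕ):ℤ)-2 < 0 by norm_num), gbz_coe, gbz_coe]
    simp
  | 1 =>
    rw [gbz_neg (m := m) (show ((1:ℕ):ℤ)-2 < 0 by norm_num),
      show ((1:ℕ):ℤ) - 1 = ((0:ℕ):ℤ) by norm_num,
      gbz_coe, gbz_coe, gbz_coe]
    have h1 : gb (m+2) 1 = gb (m+1) 1 + X^(m+1) * gb (m+1) 0 := by
      rw [gb_succ_succ (m+1) 0, Nat.sub_zero]
    rw [h1, pascal2 m 0]
    simp only [gb_zero_right, mul_one, Int.toNat_natCast, pow_one]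
    ring
  | (b+2) =>
    have hb : b ≤ m := by
      have : ((b:ℤ)) ≤ (m:ℤ) := by push_cast at h2 ⊢; omega
      exact_mod_cast this
    rw [show ((b+2:ℕ):ℤ) - 1 = ((b+1:ℕ):ℤ) by push_cast; ring,
        show ((b+2:ℕ):ℤ) - 2 = ((b:ℕ):ℤ) by push_cast; ring,
        show ((m:ℕ)+2-((b+2:ℕ):ℤ)) = ((m-b:ℕ):ℤ) by push_cast [hb]; omega]
    rw [gbz_coe, gbz_coe, gbz_coe, gbz_coe, Int.toNat_natCast, Int.toNat_natCast]
    exact dPnat m b hb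

def g4 (m : ℕ) (a : ℤ) : A2 := Polynomial.expand (ZMod 2) 4 (gbz m a)

lemma g4_neg {m : ℕ} {a : ℤ} (h : a < 0) : g4 m a = 0 := by
  rw [g4, gbz_neg h, map_zero]

lemma g4_gt {m : ℕ} {a : ℤ} (h : (m:ℤ) < a) : g4 m a = 0 := by
  rw [g4, gbz_gt h, map_zero]

lemma dP4 (m : ℕ) (a : ℤ) :
    g4 (m+2) a = (1+X^(4*(m+1))) * g4 m (a-1) + X^(4*a.toNat) * g4 m a
      + X^(4*((m+2-a).toNat)) * g4 m (a-2) := by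
  simp only [g4, dPz m a, map_add, map_mul, map_one, map_pow, Polynomial.expand_X]
  rw [← pow_mul, ← pow_mul, ← pow_mul]

def tnat (k : ℤ) : ℕ := (k*(2*k+1)).toNat

lemma tnat_cast (k : ℤ) : ((tnat k : ℤ)) = k*(2*k+1) := by
  rw [tnat, Int.toNat_of_nonneg]
  rcases le_or_gt 0 k with h | h
  · positivity
  · have hk : k ≤ -1 := by omega
    nlinarith

lemma expA (n : ℕ) (k : ℤ) (h : -(n:ℤ) ≤ k) :
    4*(((n:ℤ)+k).toNat) + tnat (k-1) = (4*n+1) + tnat k := by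
  have h1 : ((((n:ℤ)+k).toNat : ℤ)) = (n:ℤ)+k := Int.toNat_of_nonneg (by omega)
  have : (↑(4*(((n:ℤ)+k).toNat) + tnat (k-1)) : ℤ) = (↑((4*n+1) + tnat k) : ℤ) := by
    push_cast [tnat_cast, h1]
    ring
  exact_mod_cast this

lemma expB (n : ℕ) (k : ℤ) (h : k ≤ (n:ℤ)) :
    4*(((n:ℤ)-k).toNat) + tnat (k+1) = (4*n+3) + tnat k := by
  have h1 : ((((n:ℤ)-k).toNat : ℤ)) = (n:ℤ)-k := Int.toNat_of_nonneg (by omega)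
  have : (↑(4*(((n:ℤ)-k).toNat) + tnat (k+1)) : ℤ) = (↑((4*n+3) + tnat k) : ℤ) := by
    push_cast [tnat_cast, h1]
    ring
  exact_mod_cast this

theorem JTP : ∀ n : ℕ, ∏ j ∈ Finset.Icc 1 n, ((1+X^(4*j-3))*(1+(X:A2)^(4*j-1)))
    = ∑ k ∈ Finset.Icc (-(n:ℤ)) (n:ℤ), g4 (2*n) ((n:ℤ)+k) * X^(tnat k)
  | 0 => by
    rw [show ((0:ℕ):ℤ) = 0 by norm_num]
    rw [show (-(0:ℤ)) = 0 by norm_num, Finset.Icc_self, Finset.sum_singleton]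
    norm_num [g4, gbz, tnat]
  | n+1 => by
    rw [Finset.prod_Icc_succ_top (by omega : 1 ≤ n+1), JTP n,
      show 4*(n+1)-3 = 4*n+1 by omega, show 4*(n+1)-1 = 4*n+3 by omega,
      show ((n+1:ℕ):ℤ) = (n:ℤ)+1 by push_cast; ring,
      show 2*(n+1) = 2*n+2 by ring]
    set S := ∑ k ∈ Finset.Icc (-(n:ℤ)) (n:ℤ), g4 (2*n) ((n:ℤ)+k) * X^(tnat k) with hS
    set K := Finset.Icc (-((n:ℤ)+1)) ((n:ℤ)+1) with hK
    set I := Finset.Icc (-(n:ℤ)) ((n:ℤ)) with hI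
    have hsub : I ⊆ K := Finset.Icc_subset_Icc (by omega) (by omega)
    have hT : ∑ k ∈ K, g4 (2*n+2) ((n:ℤ)+1+k) * X^(tnat k)
        = ∑ k ∈ K, ((1+X^(4*(2*n+1))) * g4 (2*n) ((n:ℤ)+k) * X^(tnat k)
          + X^(4*(((n:ℤ)+1+k).toNat)) * g4 (2*n) ((n:ℤ)+1+k) * X^(tnat k)
          + X^(4*(((n:ℤ)+1-k).toNat)) * g4 (2*n) ((n:ℤ)-1+k) * X^(tnat k)) := by
      refine Finset.sum_congr rfl fun k hk => ?_
      rw [dP4 (2*n) ((n:ℤ)+1+k)]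
      rw [show (n:ℤ)+1+k-1 = (n:ℤ)+k by ring, show (n:ℤ)+1+k-2 = (n:ℤ)-1+k by ring,
        show ((2*n:ℕ):ℤ)+2-((n:ℤ)+1+k) = (n:ℤ)+1-k by push_cast; ring]
      ring
    rw [hT, Finset.sum_add_distrib, Finset.sum_add_distrib]
    -- S1
    have hS1 : ∑ k ∈ K, (1+X^(4*(2*n+1))) * g4 (2*n) ((n:ℤ)+k) * X^(tnat k)
        = (1+X^(4*(2*n+1))) * S := by
      rw [hS, Finset.mul_sum]
      refine (Finset.sum_subset hsub fun k hk hnk => ?_).symm.trans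
        (Finset.sum_congr rfl fun k hk => by ring)
      have hk' := Finset.mem_Icc.mp hk
      have hnk' : ¬(-(n:ℤ) ≤ k ∧ k ≤ (n:ℤ)) := fun hc => hnk (Finset.mem_Icc.mpr hc)
      rcases (by omega : k = (n:ℤ)+1 ∨ k = -((n:ℤ)+1)) with rfl | rfl
      · rw [g4_gt (by push_cast; omega), mul_zero, zero_mul]
      · rw [g4_neg (by omega), mul_zero, zero_mul]
    -- S2
    have hS2 : ∑ k ∈ K, X^(4*(((n:ℤ)+1+k).toNat)) * g4 (2*n) ((n:ℤ)+1+k) * X^(tnat k)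
        = X^(4*n+1) * S := by
      have e1 : ∑ k ∈ K, X^(4*(((n:ℤ)+1+k).toNat)) * g4 (2*n) ((n:ℤ)+1+k) * X^(tnat k)
          = ∑ k ∈ Finset.Icc (-(n:ℤ)) ((n:ℤ)+2),
              X^(4*(((n:ℤ)+k).toNat)) * g4 (2*n) ((n:ℤ)+k) * X^(tnat (k-1)) := by
        refine Finset.sum_bij' (fun k _ => k+1) (fun k _ => k-1) ?_ ?_ ?_ ?_ ?_
        · intro a ha
          simp only [hK, Finset.mem_Icc] at ha ⊢
          omega
        · intro a ha
          simp only [hK, Finset.mem_Icc] at ha ⊢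
          omega
        · intro a ha; ring
        · intro a ha; ring
        · intro a ha
          rw [show (n:ℤ)+(a+1) = (n:ℤ)+1+a by ring, show a+1-1 = a by ring]
      rw [e1]
      have e2 : ∑ k ∈ Finset.Icc (-(n:ℤ)) ((n:ℤ)+2),
            X^(4*(((n:ℤ)+k).toNat)) * g4 (2*n) ((n:ℤ)+k) * X^(tnat (k-1))
          = ∑ k ∈ I, X^(4*(((n:ℤ)+k).toNat)) * g4 (2*n) ((n:ℤ)+k) * X^(tnat (k-1)) := by
        refine (Finset.sum_subset (Finset.Icc_subset_Icc (by omega) (by omega))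
          fun k hk hnk => ?_).symm
        have hk' := Finset.mem_Icc.mp hk
        have hnk' : ¬(-(n:ℤ) ≤ k ∧ k ≤ (n:ℤ)) := fun hc => hnk (Finset.mem_Icc.mpr hc)
        rw [g4_gt (by push_cast; omega), mul_zero, zero_mul]
      rw [e2, hS, Finset.mul_sum]
      refine Finset.sum_congr rfl fun k hk => ?_
      have hk' := Finset.mem_Icc.mp (hI ▸ hk)
      have hexp := expA n k hk'.1
      calc X^(4*(((n:ℤ)+k).toNat)) * g4 (2*n) ((n:ℤ)+k) * X^(tnat (k-1))
          = g4 (2*n) ((n:ℤ)+k) * X^(4*(((n:ℤ)+k).toNat) + tnat (k-1)) := by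
            rw [pow_add]; ring
        _ = g4 (2*n) ((n:ℤ)+k) * X^((4*n+1) + tnat k) := by rw [hexp]
        _ = X^(4*n+1) * (g4 (2*n) ((n:ℤ)+k) * X^(tnat k)) := by rw [pow_add]; ring
    -- S3
    have hS3 : ∑ k ∈ K, X^(4*(((n:ℤ)+1-k).toNat)) * g4 (2*n) ((n:ℤ)-1+k) * X^(tnat k)
        = X^(4*n+3) * S := by
      have e1 : ∑ k ∈ K, X^(4*(((n:ℤ)+1-k).toNat)) * g4 (2*n) ((n:ℤ)-1+k) * X^(tnat k)
          = ∑ k ∈ Finset.Icc (-((n:ℤ)+2)) ((n:ℤ)),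
              X^(4*(((n:ℤ)-k).toNat)) * g4 (2*n) ((n:ℤ)+k) * X^(tnat (k+1)) := by
        refine Finset.sum_bij' (fun k _ => k-1) (fun k _ => k+1) ?_ ?_ ?_ ?_ ?_
        · intro a ha
          simp only [hK, Finset.mem_Icc] at ha ⊢
          omega
        · intro a ha
          simp only [hK, Finset.mem_Icc] at ha ⊢
          omega
        · intro a ha; ring
        · intro a ha; ring
        · intro a ha
          rw [show (n:ℤ)-(a-1) = (n:ℤ)+1-a by ring, show (n:ℤ)+(a-1) = (n:ℤ)-1+a by ring,
            show a-1+1 = a by ring]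
      rw [e1]
      have e2 : ∑ k ∈ Finset.Icc (-((n:ℤ)+2)) ((n:ℤ)),
            X^(4*(((n:ℤ)-k).toNat)) * g4 (2*n) ((n:ℤ)+k) * X^(tnat (k+1))
          = ∑ k ∈ I, X^(4*(((n:ℤ)-k).toNat)) * g4 (2*n) ((n:ℤ)+k) * X^(tnat (k+1)) := by
        refine (Finset.sum_subset (Finset.Icc_subset_Icc (by omega) (by omega))
          fun k hk hnk => ?_).symm
        have hk' := Finset.mem_Icc.mp hk
        have hnk' : ¬(-(n:ℤ) ≤ k ∧ k ≤ (n:ℤ)) := fun hc => hnk (Finset.mem_Icc.mpr hc)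
        rw [g4_neg (by omega), mul_zero, zero_mul]
      rw [e2, hS, Finset.mul_sum]
      refine Finset.sum_congr rfl fun k hk => ?_
      have hk' := Finset.mem_Icc.mp (hI ▸ hk)
      have hexp := expB n k hk'.2
      calc X^(4*(((n:ℤ)-k).toNat)) * g4 (2*n) ((n:ℤ)+k) * X^(tnat (k+1))
          = g4 (2*n) ((n:ℤ)+k) * X^(4*(((n:ℤ)-k).toNat) + tnat (k+1)) := by
            rw [pow_add]; ring
        _ = g4 (2*n) ((n:ℤ)+k) * X^((4*n+3) + tnat k) := by rw [hexp]
        _ = X^(4*n+3) * (g4 (2*n) ((n:ℤ)+k) * X^(tnat k)) := by rw [pow_add]; ring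
    rw [hS1, hS2, hS3]
    rw [show 4*(2*n+1) = (4*n+1)+(4*n+3) by ring, pow_add]
    ring

-- truncation infrastructure
lemma prod_one_mod (L : ℕ) (s : Finset ℕ) (f : ℕ → A2) (h : ∀ i ∈ s, X^L ∣ (f i - 1)) :
    X^L ∣ (∏ i ∈ s, f i) - 1 := by
  induction s using Finset.cons_induction with
  | empty => simp
  | cons a s ha ih =>
    rw [Finset.prod_cons]
    have h1 : X^L ∣ f a - 1 := h a (Finset.mem_cons_self a s)
    have h2 : X^L ∣ (∏ i ∈ s, f i) - 1 := ih fun i hi => h i (Finset.mem_cons_of_mem hi)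
    have : f a * ∏ i ∈ s, f i - 1 = f a * ((∏ i ∈ s, f i) - 1) + (f a - 1) := by ring
    rw [this]
    exact dvd_add (Dvd.dvd.mul_left h2 _) h1

lemma coeff_eq_of_dvd {p q : A2} {L t : ℕ} (h : X^L ∣ p - q) (ht : t < L) :
    p.coeff t = q.coeff t := by
  obtain ⟨c, hc⟩ := h
  have hp : p = q + c * X^L := by rw [mul_comm]; linear_combination hc
  rw [hp, Polynomial.coeff_add, Polynomial.coeff_mul_X_pow', if_neg (by omega), add_zero]

lemma prod_split (f : ℕ → A2) : ∀ M, ∏ i ∈ Finset.Ioc 0 (2*M), f i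
    = ∏ j ∈ Finset.Ioc 0 M, (f (2*j-1) * f (2*j))
  | 0 => by simp
  | M+1 => by
    rw [show 2*(M+1) = (2*M+1)+1 by ring, Finset.prod_Ioc_succ_top (by omega),
      Finset.prod_Ioc_succ_top (by omega), prod_split f M,
      Finset.prod_Ioc_succ_top (by omega : 0 ≤ M)]
    rw [show 2*(M+1)-1 = 2*M+1 by omega, show 2*(M+1) = 2*M+1+1 by omega]
    ring

def Aprod (M : ℕ) : A2 := ∏ i ∈ Finset.Ioc 0 M, (1 + X^i)
def D4p (r : ℕ) : A2 := ∏ i ∈ Finset.Ioc 0 r, (1 + X^(4*i))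
def Podd (M : ℕ) : A2 := ∏ j ∈ Finset.Ioc 0 M, (1 + X^(2*j-1))

lemma pow2 (m : ℕ) : ((1 + X^m : A2))^2 = 1 + X^(2*m) := by
  have h := add_pow_char (1:A2) (X^m)
  rw [h, one_pow, ← pow_mul, mul_comm]

lemma pow4 (m : ℕ) : ((1 + X^m : A2))^4 = 1 + X^(4*m) := by
  rw [show (4:ℕ) = 2*2 by rfl, pow_mul, pow2, pow2, ← mul_assoc]

lemma pow8 (m : ℕ) : ((1 + X^m : A2))^8 = 1 + X^(8*m) := by
  rw [show (8:ℕ) = 2*4 by rfl, pow_mul, pow2, pow4, ← mul_assoc,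
    show 4*2 = 2*4 by rfl]

lemma Aprod_sq (M : ℕ) : (Aprod M)^2 = ∏ i ∈ Finset.Ioc 0 M, (1 + X^(2*i)) := by
  rw [Aprod, ← Finset.prod_pow]
  exact Finset.prod_congr rfl fun i _ => pow2 i

lemma Aprod_pow4 (M : ℕ) : (Aprod M)^4 = D4p M := by
  rw [Aprod, D4p, ← Finset.prod_pow]
  exact Finset.prod_congr rfl fun i _ => pow4 i

lemma Aprod_split (M : ℕ) : Aprod (2*M) = Podd M * (Aprod M)^2 := by
  rw [Aprod, prod_split (fun i => 1 + X^i) M, Finset.prod_mul_distrib, Aprod_sq, Podd]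

lemma Podd_split (n : ℕ) : Podd (2*n)
    = ∏ j ∈ Finset.Icc 1 n, ((1+X^(4*j-3))*(1+(X:A2)^(4*j-1))) := by
  rw [Podd, prod_split (fun j => 1 + X^(2*j-1)) n, ← Finset.Icc_add_one_left_eq_Ioc]
  refine Finset.prod_congr rfl fun j hj => ?_
  have hj1 : 1 ≤ j := (Finset.mem_Icc.mp hj).1
  rw [show 2*(2*j-1)-1 = 4*j-3 by omega, show 2*(2*j)-1 = 4*j-1 by omega]

lemma D4p_ne_zero (r : ℕ) : D4p r ≠ 0 := by
  intro h
  have h0 : Polynomial.constantCoeff (D4p r) = 1 := by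
    rw [D4p, map_prod]
    refine Finset.prod_eq_one fun i hi => ?_
    have hi1 : 1 ≤ i := (Finset.mem_Ioc.mp hi).1
    simp [Polynomial.constantCoeff_apply, Polynomial.coeff_X_pow]
    omega
  rw [h, map_zero] at h0
  exact zero_ne_one h0

lemma D4p_tail (r s : ℕ) (h : r ≤ s) :
    D4p s = D4p r * ∏ i ∈ Finset.Ioc r s, (1 + X^(4*i)) := by
  rw [D4p, D4p, Finset.prod_Ioc_consecutive _ (by omega : 0 ≤ r) h]

lemma Aprod_tail (r s : ℕ) (h : r ≤ s) :
    Aprod s = Aprod r * ∏ i ∈ Finset.Ioc r s, (1 + X^i) := by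
  rw [Aprod, Aprod, Finset.prod_Ioc_consecutive _ (by omega : 0 ≤ r) h]

lemma g4_prod (m a : ℕ) (h : a ≤ m) :
    g4 m (a : ℤ) * D4p a * D4p (m - a) = D4p m := by
  have hgb := gb_prod m a h
  have := congrArg (Polynomial.expand (ZMod 2) 4) hgb
  rw [map_mul, map_mul] at this
  have hD : ∀ r : ℕ, Polynomial.expand (ZMod 2) 4 (Dq r) = D4p r := by
    intro r
    rw [Dq, D4p, map_prod]
    exact Finset.prod_congr rfl fun i _ => by
      rw [map_add, map_one, map_pow, Polynomial.expand_X, ← pow_mul]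
  rw [hD, hD, hD] at this
  rw [g4, gbz_coe]
  exact this

lemma Aprod_diff (r s : ℕ) (h : r ≤ s) : X^(r+1) ∣ Aprod s - Aprod r := by
  rw [Aprod_tail r s h]
  have h1 : Aprod r * (∏ i ∈ Finset.Ioc r s, (1 + X^i)) - Aprod r
      = Aprod r * ((∏ i ∈ Finset.Ioc r s, (1 + X^i)) - 1) := by ring
  rw [h1]
  refine Dvd.dvd.mul_left (prod_one_mod _ _ _ fun i hi => ?_) _
  have hi' := Finset.mem_Ioc.mp hi
  rw [add_sub_cancel_left]
  exact pow_dvd_pow X (by omega)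

lemma cube_stable (t r s : ℕ) (h1 : t ≤ r) (h2 : r ≤ s) :
    ((Aprod s)^3).coeff t = ((Aprod r)^3).coeff t := by
  refine coeff_eq_of_dvd ?_ (by omega : t < r+1)
  have hd := Aprod_diff r s h2
  have : (Aprod s)^3 - (Aprod r)^3
      = (Aprod s - Aprod r) * ((Aprod s)^2 + Aprod s * Aprod r + (Aprod r)^2) := by ring
  rw [this]
  exact hd.mul_right _

lemma tri_inj {k1 k2 : ℤ} (h : k1*(2*k1+1) = k2*(2*k2+1)) : k1 = k2 := by
  have h2 : (k1 - k2) * (2*(k1+k2)+1) = 0 := by linear_combination h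
  rcases mul_eq_zero.mp h2 with h3 | h3 <;> omega

lemma tri_bound {k : ℤ} {t : ℕ} (h : k*(2*k+1) ≤ (t:ℤ)) : -(t:ℤ) ≤ k ∧ k ≤ (t:ℤ) := by
  rcases le_or_gt 0 k with hk | hk
  · constructor
    · omega
    · nlinarith
  · constructor
    · nlinarith [mul_nonneg (by omega : (0:ℤ) ≤ -k) (by omega : (0:ℤ) ≤ -(k+1))]
    · omega

open Classical in
lemma core (t n : ℕ) (hn : n = 2*t+2) :
    ((Aprod (2*n))^3).coeff t = if ∃ k : ℤ, (t:ℤ) = k*(2*k+1) then 1 else 0 := by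
  have hkey : X^(2*n+1) ∣ (Aprod (2*n))^3 - D4p (2*n) * Podd (2*n) := by
    have h4 : D4p (2*n) * Podd (2*n) = (Aprod (2*n))^2 * Aprod (2*(2*n)) := by
      rw [← Aprod_pow4, Aprod_split (2*n)]
      ring
    rw [h4]
    have h5 : (Aprod (2*n))^3 - (Aprod (2*n))^2 * Aprod (2*(2*n))
        = -((Aprod (2*n))^2 * (Aprod (2*(2*n)) - Aprod (2*n))) := by ring
    rw [h5]
    exact ((Aprod_diff (2*n) (2*(2*n)) (by omega)).mul_left _).neg_right
  have hc1 : ((Aprod (2*n))^3).coeff t = (D4p (2*n) * Podd (2*n)).coeff t :=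
    coeff_eq_of_dvd hkey (by omega)
  rw [hc1, Podd_split n, JTP n, Finset.mul_sum, Polynomial.finset_sum_coeff]
  have hterm : ∀ k ∈ Finset.Icc (-(n:ℤ)) (n:ℤ),
      (D4p (2*n) * (g4 (2*n) ((n:ℤ)+k) * X^(tnat k))).coeff t
        = if tnat k = t then (1:ZMod 2) else 0 := by
    intro k hk
    have hk' := Finset.mem_Icc.mp hk
    rw [← mul_assoc, Polynomial.coeff_mul_X_pow']
    by_cases hle : tnat k ≤ t
    · rw [if_pos hle]
      have hcast : k*(2*k+1) ≤ (t:ℤ) := by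
        rw [← tnat_cast]
        exact_mod_cast hle
      have hb := tri_bound hcast
      set a' : ℕ := ((n:ℤ)+k).toNat with ha'
      have hca : ((a' : ℤ)) = (n:ℤ)+k := Int.toNat_of_nonneg (by omega)
      have ha'lb : t + 2 ≤ a' := by omega
      have ha'ub : a' ≤ 2*n := by omega
      have ha'ub2 : t + 2 ≤ 2*n - a' := by omega
      have hprod := g4_prod (2*n) a' ha'ub
      rw [show ((n:ℤ)+k) = ((a':ℕ):ℤ) from hca.symm]
      have hcancel : D4p (2*n) * g4 (2*n) ((a':ℕ):ℤ)
          = (∏ i ∈ Finset.Ioc a' (2*n), (1+X^(4*i)))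
            * (∏ i ∈ Finset.Ioc (2*n - a') (2*n), (1+X^(4*i))) := by
        apply mul_right_cancel₀ (mul_ne_zero (D4p_ne_zero a') (D4p_ne_zero (2*n - a')))
        calc D4p (2*n) * g4 (2*n) ((a':ℕ):ℤ) * (D4p a' * D4p (2*n - a'))
            = D4p (2*n) * (g4 (2*n) ((a':ℕ):ℤ) * D4p a' * D4p (2*n - a')) := by ring
          _ = D4p (2*n) * D4p (2*n) := by rw [hprod]
          _ = (D4p a' * ∏ i ∈ Finset.Ioc a' (2*n), (1+X^(4*i)))
              * (D4p (2*n - a') * ∏ i ∈ Finset.Ioc (2*n - a') (2*n), (1+X^(4*i))) := by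
                rw [← D4p_tail a' (2*n) ha'ub, ← D4p_tail (2*n - a') (2*n) (by omega)]
          _ = (∏ i ∈ Finset.Ioc a' (2*n), (1+X^(4*i)))
              * (∏ i ∈ Finset.Ioc (2*n - a') (2*n), (1+X^(4*i)))
              * (D4p a' * D4p (2*n - a')) := by ring
      have hone : X^(t+1) ∣ (D4p (2*n) * g4 (2*n) ((a':ℕ):ℤ)) - 1 := by
        rw [hcancel]
        have hP1 : X^(t+1) ∣ (∏ i ∈ Finset.Ioc a' (2*n), (1+X^(4*i)) : A2) - 1 := by
          refine prod_one_mod _ _ _ fun i hi => ?_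
          have hi' := Finset.mem_Ioc.mp hi
          rw [add_sub_cancel_left]
          exact pow_dvd_pow X (by omega)
        have hP2 : X^(t+1) ∣ (∏ i ∈ Finset.Ioc (2*n - a') (2*n), (1+X^(4*i)) : A2) - 1 := by
          refine prod_one_mod _ _ _ fun i hi => ?_
          have hi' := Finset.mem_Ioc.mp hi
          rw [add_sub_cancel_left]
          exact pow_dvd_pow X (by omega)
        have hsplit : (∏ i ∈ Finset.Ioc a' (2*n), (1+X^(4*i)) : A2)
              * (∏ i ∈ Finset.Ioc (2*n - a') (2*n), (1+X^(4*i))) - 1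
            = (∏ i ∈ Finset.Ioc a' (2*n), (1+X^(4*i)))
              * ((∏ i ∈ Finset.Ioc (2*n - a') (2*n), (1+X^(4*i))) - 1)
              + ((∏ i ∈ Finset.Ioc a' (2*n), (1+X^(4*i))) - 1) := by ring
        rw [hsplit]
        exact dvd_add (hP2.mul_left _) hP1
      rw [coeff_eq_of_dvd hone (by omega : t - tnat k < t+1), Polynomial.coeff_one]
      by_cases heq : tnat k = t
      · rw [if_pos (by omega), if_pos heq]
      · rw [if_neg (by omega), if_neg heq]
    · rw [if_neg hle, if_neg (by omega)]
  rw [Finset.sum_congr rfl hterm]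
  by_cases hex : ∃ k : ℤ, (t:ℤ) = k*(2*k+1)
  · obtain ⟨k0, hk0⟩ := hex
    have hb := tri_bound (le_of_eq hk0.symm)
    have hmem : k0 ∈ Finset.Icc (-(n:ℤ)) (n:ℤ) := Finset.mem_Icc.mpr (by omega)
    rw [Finset.sum_eq_single_of_mem k0 hmem ?uniq, if_pos ?eq0, if_pos ⟨k0, hk0⟩]
    case eq0 =>
      have : (tnat k0 : ℤ) = (t : ℤ) := by rw [tnat_cast]; omega
      exact_mod_cast this
    case uniq =>
      intro b hb2 hbne
      rw [if_neg]
      intro hcon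
      apply hbne
      apply tri_inj (k2 := k0)
      rw [← tnat_cast, hcon, hk0]
  · rw [Finset.sum_eq_zero, if_neg hex]
    intro k hk
    rw [if_neg]
    intro hcon
    exact hex ⟨k, by rw [← tnat_cast, hcon]⟩

open Classical in
theorem main_count (t M : ℕ) (htM : t ≤ M) :
    ((Aprod M)^3).coeff t = if ∃ k : ℤ, (t:ℤ) = k*(2*k+1) then 1 else 0 := by
  rw [← core t (2*t+2) rfl]
  rcases le_total M (2*(2*t+2)) with h | h
  · exact (cube_stable t M (2*(2*t+2)) htM h).symm
  · exact cube_stable t (2*(2*t+2)) M (by omega) h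

open Classical in
theorem delta_mod_two_coeff_eq_oddSquare_indicator
    (N : ℕ) (hN : 1 ≤ N) (n : ℕ) (hn : 1 ≤ n) (hnN : n ≤ N) :
    (X * ∏ m ∈ Finset.Icc 1 N, (1 - X ^ m) ^ 24 : Polynomial (ZMod 2)).coeff n =
      if ∃ k : ℕ, n = (2 * k + 1) ^ 2 then 1 else 0 := by
  have hfac : ∀ m : ℕ, ((1 - X ^ m : A2)) ^ 24 = (1 + X^(8*m))^3 := by
    intro m
    rw [CharTwo.sub_eq_add, show (24:ℕ) = 8*3 by rfl, pow_mul, pow8]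
  have hexp : Polynomial.expand (ZMod 2) 8 ((Aprod N)^3)
      = ∏ m ∈ Finset.Icc 1 N, ((1 + X^(8*m) : A2))^3 := by
    calc Polynomial.expand (ZMod 2) 8 ((Aprod N)^3)
        = (∏ m ∈ Finset.Icc 1 N, Polynomial.expand (ZMod 2) 8 (1+X^m))^3 := by
          rw [map_pow, Aprod, ← Finset.Icc_add_one_left_eq_Ioc, map_prod, zero_add]
      _ = (∏ m ∈ Finset.Icc 1 N, ((1+X^(8*m)) : A2))^3 := by
          refine congrArg (· ^ 3) (Finset.prod_congr rfl fun i _ => ?_)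
          rw [map_add, map_one, map_pow, Polynomial.expand_X, ← pow_mul]
      _ = ∏ m ∈ Finset.Icc 1 N, ((1 + X^(8*m) : A2))^3 := (Finset.prod_pow _ _ _).symm
  have hprod : (∏ m ∈ Finset.Icc 1 N, (1 - X ^ m) ^ 24 : A2)
      = Polynomial.expand (ZMod 2) 8 ((Aprod N)^3) := by
    rw [hexp]
    exact Finset.prod_congr rfl fun m _ => hfac m
  rw [hprod]
  obtain ⟨d, rfl⟩ : ∃ d, n = d + 1 := ⟨n-1, by omega⟩
  rw [Polynomial.coeff_X_mul, Polynomial.coeff_expand (by norm_num : 0 < 8)]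
  by_cases hdvd : (8:ℕ) ∣ d
  · obtain ⟨t, rfl⟩ := hdvd
    rw [if_pos ⟨t, rfl⟩, Nat.mul_div_cancel_left t (by norm_num),
      main_count t N (by omega)]
    by_cases hex : ∃ k : ℤ, (t:ℤ) = k*(2*k+1)
    · rw [if_pos hex, if_pos ?_]
      obtain ⟨k, hk⟩ := hex
      rcases le_or_gt 0 k with hk0 | hk0
      · refine ⟨(2*k).toNat, ?_⟩
        have h2 : (((2*k).toNat : ℕ) : ℤ) = 2*k := Int.toNat_of_nonneg (by omega)
        have hgoal : ((8*t+1 : ℕ) : ℤ) = (2*(((2*k).toNat : ℕ):ℤ) + 1)^2 := by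
          push_cast [h2]
          linear_combination 8*hk
        exact_mod_cast hgoal
      · refine ⟨(-2*k-1).toNat, ?_⟩
        have h2 : ((((-2*k-1)).toNat : ℕ) : ℤ) = -2*k-1 := Int.toNat_of_nonneg (by omega)
        have hgoal : ((8*t+1 : ℕ) : ℤ) = (2*((((-2*k-1)).toNat : ℕ):ℤ) + 1)^2 := by
          push_cast [h2]
          linear_combination 8*hk
        exact_mod_cast hgoal
    · rw [if_neg hex, if_neg ?_]
      rintro ⟨k, hk⟩
      apply hex
      have hZ : (8*(t:ℤ) + 1) = (2*(k:ℤ)+1)^2 := by exact_mod_cast hk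
      rcases Nat.even_or_odd k with ⟨j, hj⟩ | ⟨j, hj⟩
      · refine ⟨(j:ℤ), ?_⟩
        have hjZ : (k:ℤ) = (j:ℤ) + (j:ℤ) := by exact_mod_cast hj
        have h8 : 8*(t:ℤ) = 8*((j:ℤ)*(2*(j:ℤ)+1)) := by
          linear_combination hZ + (4*(k:ℤ)+8*(j:ℤ)+4) * hjZ
        exact mul_left_cancel₀ (by norm_num : (8:ℤ) ≠ 0) h8
      · refine ⟨-((j:ℤ)+1), ?_⟩
        have hjZ : (k:ℤ) = 2*(j:ℤ) + 1 := by exact_mod_cast hj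
        have h8 : 8*(t:ℤ) = 8*((-((j:ℤ)+1))*(2*(-((j:ℤ)+1))+1)) := by
          linear_combination hZ + (4*(k:ℤ)+8*(j:ℤ)+8) * hjZ
        exact mul_left_cancel₀ (by norm_num : (8:ℤ) ≠ 0) h8
  · rw [if_neg hdvd, if_neg ?_]
    rintro ⟨k, hk⟩
    apply hdvd
    have hs : (2*k+1)^2 = 4*(k*(k+1)) + 1 := by ring
    obtain ⟨c, hc⟩ := Nat.even_mul_succ_self k
    rw [hs] at hk
    rw [hc] at hk
    exact ⟨c, by omega⟩

end
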